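/- Among all bicyclic graphic degree sequences of length n with minimum degree 2, for any graph G with such a degree sequence: if the sequence is (4, 2, ..., 2) then M2(G) ≤ 4n + 20, and if the sequence is (3, 3, 2, ..., 2) then M2(G) ≤ 4n + 17; in particular the maximum of M2 over the degree sequence (3,3,2,...,2) is strictly smaller than the maximum over (4,2,...,2). -/
import Mathlib


open SimpleGraph Finset

/-- The second Zagreb index `M2(G) = ∑_{uv ∈ E(G)} d(u)·d(v)`. -/
noncomputable def M2 {V : Type*} [Fintype V] (G : SimpleGraph V) : ℕ :=
  letI := Classical.decEq V
  letI : DecidableRel G.Adj := Classical.decRel _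
  ∑ e ∈ G.edgeFinset,
    Sym2.lift ⟨fun x y => G.degree x * G.degree y, fun _ _ => Nat.mul_comm _ _⟩ e

/-- The degree of a vertex. -/
noncomputable def deg {V : Type*} [Fintype V] (G : SimpleGraph V) (v : V) : ℕ :=
  letI : DecidableRel G.Adj := Classical.decRel _
  G.degree v

section helpers
variable {V : Type} [Fintype V]

lemma deg_eq (G : SimpleGraph V) [DecidableRel G.Adj] (v : V) :
    deg G v = G.degree v := by
  unfold deg; congr!

lemma M2_eq [DecidableEq V] (G : SimpleGraph V) [DecidableRel G.Adj] :
    M2 G = ∑ e ∈ G.edgeFinset,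
      Sym2.lift ⟨fun x y => G.degree x * G.degree y, fun _ _ => Nat.mul_comm _ _⟩ e := by
  unfold M2; congr!

lemma filter_mem_eq [DecidableEq V] (G : SimpleGraph V) [DecidableRel G.Adj] (u : V) :
    (G.edgeFinset.filter (fun e => u ∈ e)) = G.incidenceFinset u := by
  ext e
  simp [mem_incidenceFinset, SimpleGraph.incidenceSet, and_comm]

lemma sum_ind [DecidableEq V] (G : SimpleGraph V) [DecidableRel G.Adj] (u : V) :
    ∑ e ∈ G.edgeFinset, (if u ∈ e then 1 else 0) = G.degree u := by
  have h : ∑ e ∈ G.edgeFinset, (if u ∈ e then 1 else 0)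
      = (G.edgeFinset.filter (fun e => u ∈ e)).card := by
    rw [Finset.card_filter]
  rw [h, filter_mem_eq, card_incidenceFinset_eq_degree]

lemma ncard_eq [DecidableEq V] (G : SimpleGraph V) [DecidableRel G.Adj] :
    G.edgeSet.ncard = G.edgeFinset.card := by
  rw [← coe_edgeFinset, Set.ncard_coe_finset]

end helpers

section keys
variable {V : Type} [Fintype V]

lemma key4 (G : SimpleGraph V) (c : V) (hc : deg G c = 4)
    (h2 : ∀ v : V, v ≠ c → deg G v = 2) :
    M2 G = 4 * G.edgeSet.ncard + 16 := by
  classical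
  rw [M2_eq, ncard_eq]
  have hdc : G.degree c = 4 := by rw [← deg_eq]; exact hc
  have hd2 : ∀ v, v ≠ c → G.degree v = 2 := fun v hv => by rw [← deg_eq]; exact h2 v hv
  have hpt : ∀ e ∈ G.edgeFinset,
      Sym2.lift ⟨fun x y => G.degree x * G.degree y, fun _ _ => Nat.mul_comm _ _⟩ e
        = 4 + 4 * (if c ∈ e then 1 else 0) := by
    intro e he
    induction e using Sym2.ind with
    | _ x y =>
      rw [mem_edgeFinset, mem_edgeSet] at he
      have hxy := he.ne
      simp only [Sym2.lift_mk, Sym2.mem_iff]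
      by_cases hx : x = c
      · have hy : y ≠ c := fun h => hxy (hx.trans h.symm)
        rw [hx, hdc, hd2 y hy]; simp
      · by_cases hy : y = c
        · rw [hy, hdc, hd2 x hx]; simp [hy]
        · rw [hd2 x hx, hd2 y hy]
          simp [show ¬c = x from fun h => hx h.symm, show ¬c = y from fun h => hy h.symm]
  rw [Finset.sum_congr rfl hpt, Finset.sum_add_distrib, Finset.sum_const,
    ← Finset.mul_sum, sum_ind, hdc, smul_eq_mul]
  ring

lemma key33 (G : SimpleGraph V) (u v : V) (huv : u ≠ v)
    (hu : deg G u = 3) (hv : deg G v = 3)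
    (h2 : ∀ w : V, w ≠ u → w ≠ v → deg G w = 2) :
    M2 G ≤ 4 * G.edgeSet.ncard + 13 := by
  classical
  rw [M2_eq, ncard_eq]
  have hd : ∀ x : V, G.degree x = if x = u then 3 else if x = v then 3 else 2 := by
    intro x
    split_ifs with h1 h3
    · rw [← deg_eq, h1]; exact hu
    · rw [← deg_eq, h3]; exact hv
    · rw [← deg_eq]; exact h2 x h1 h3
  have hpt : ∀ e ∈ G.edgeFinset,
      Sym2.lift ⟨fun x y => G.degree x * G.degree y, fun _ _ => Nat.mul_comm _ _⟩ e
        ≤ 4 + (2 * (if u ∈ e then 1 else 0) + (2 * (if v ∈ e then 1 else 0)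
            + (if e = s(u,v) then 1 else 0))) := by
    intro e he
    induction e using Sym2.ind with
    | _ x y =>
      rw [mem_edgeFinset, mem_edgeSet] at he
      have hxy := he.ne
      simp only [Sym2.lift_mk, Sym2.mem_iff, Sym2.eq_iff]
      rw [hd x, hd y]
      by_cases hxu : x = u <;> by_cases hxv : x = v <;> by_cases hyu : y = u <;>
        by_cases hyv : y = v <;> simp_all <;> split_ifs <;> omega
  calc ∑ e ∈ G.edgeFinset,
        Sym2.lift ⟨fun x y => G.degree x * G.degree y, fun _ _ => Nat.mul_comm _ _⟩ e
      ≤ ∑ e ∈ G.edgeFinset, (4 + (2 * (if u ∈ e then 1 else 0)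
          + (2 * (if v ∈ e then 1 else 0) + (if e = s(u,v) then 1 else 0)))) :=
        Finset.sum_le_sum hpt
    _ ≤ 4 * G.edgeFinset.card + 13 := by
        rw [Finset.sum_add_distrib, Finset.sum_add_distrib, Finset.sum_add_distrib,
          Finset.sum_const, ← Finset.mul_sum, ← Finset.mul_sum, sum_ind, sum_ind,
          smul_eq_mul]
        have hu3 : G.degree u = 3 := by rw [← deg_eq]; exact hu
        have hv3 : G.degree v = 3 := by rw [← deg_eq]; exact hv
        have hle : (∑ e ∈ G.edgeFinset, if e = s(u,v) then 1 else 0) ≤ 1 := by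
          rw [Finset.sum_ite_eq' G.edgeFinset s(u,v) (fun _ => 1)]
          split <;> omega
        omega

end keys

/-- For bicyclic graphs (connected, `n + 1` edges) with minimum degree 2:
with degree sequence `(4, 2^{n−1})` one has `M2 ≤ 4n + 20`, with degree sequence
`(3, 3, 2^{n−2})` one has `M2 ≤ 4n + 17`, and the second Zagreb index of any graph
of the latter kind is strictly smaller than that of any graph of the former kind. -/

theorem stmt_13 (n : ℕ)
    (seq4 : ∀ {V : Type} [Fintype V], SimpleGraph V → Prop)
    (seq33 : ∀ {V : Type} [Fintype V], SimpleGraph V → Prop)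
    (hseq4 : ∀ {V : Type} [Fintype V] (G : SimpleGraph V),
      seq4 G ↔ Fintype.card V = n ∧ G.Connected ∧ G.edgeSet.ncard = n + 1 ∧
        ∃ c : V, deg G c = 4 ∧ ∀ v : V, v ≠ c → deg G v = 2)
    (hseq33 : ∀ {V : Type} [Fintype V] (G : SimpleGraph V),
      seq33 G ↔ Fintype.card V = n ∧ G.Connected ∧ G.edgeSet.ncard = n + 1 ∧
        ∃ u v : V, u ≠ v ∧ deg G u = 3 ∧ deg G v = 3 ∧
          ∀ w : V, w ≠ u → w ≠ v → deg G w = 2) :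
    (∀ {V : Type} [Fintype V] (G : SimpleGraph V), seq4 G → M2 G ≤ 4 * n + 20) ∧
    (∀ {V : Type} [Fintype V] (G : SimpleGraph V), seq33 G → M2 G ≤ 4 * n + 17) ∧
    (∀ {V W : Type} [Fintype V] [Fintype W] (G : SimpleGraph V) (G' : SimpleGraph W),
      seq33 G → seq4 G' → M2 G < M2 G') := by
  have h4 : ∀ {V : Type} [Fintype V] (G : SimpleGraph V), seq4 G → M2 G = 4 * n + 20 := by
    intro V _ G hG
    rw [hseq4] at hG
    obtain ⟨-, -, hE, c, hc, h2⟩ := hG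
    rw [key4 G c hc h2, hE]; ring
  have h33 : ∀ {V : Type} [Fintype V] (G : SimpleGraph V), seq33 G → M2 G ≤ 4 * n + 17 := by
    intro V _ G hG
    rw [hseq33] at hG
    obtain ⟨-, -, hE, u, v, huv, hu, hv, h2⟩ := hG
    have := key33 G u v huv hu hv h2
    rw [hE] at this; omega
  refine ⟨fun G hG => (h4 G hG).le, h33, fun G G' hG hG' => ?_⟩
  have := h33 G hG
  have := h4 G' hG'
  omega
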